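/- Let G be an ε-regular bipartite graph with parts X, Y, each of size at least n, and density d, where 0 < 1/n ≪ ε ≪ d. Then the C₄-homomorphism density satisfies d_{C₄}(G) = d⁴ ± 10ε, i.e. |d_{C₄}(G) − d⁴| ≤ 10ε. -/

import Mathlib

/-!
The C₄-count is `∑_{x₁, x₂} codeg(x₁, x₂)²`. Regularity against any `B ⊆ Y` with `|B| > ε|Y|`
leaves at most `2ε|X|` vertices whose degree into `B` is not `(d ± ε)|B|`. Applied to `B = Y`
and then to `B = N(x₁)` for each typical `x₁`, this gives codegree `(d ± ε)²|Y|` for all pairs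
outside a set of `4ε|X|²` pairs, and those contribute at most `4ε|X|²|Y|²`.
-/

open Finset

section FewExceptions

variable {ι : Type*} [Fintype ι] {p : ι → Prop} [DecidablePred p] {f : ι → ℝ} {a b K δ : ℝ}

lemma sum_le_of_card_filter_not_le (hb : 0 ≤ b) (hK : 0 ≤ K) (hδ : (#{i | ¬ p i} : ℝ) ≤ δ)
    (hfK : ∀ i, f i ≤ K) (hfb : ∀ i, p i → f i ≤ b) :
    ∑ i, f i ≤ Fintype.card ι * b + δ * K := by
  rw [← sum_filter_add_sum_filter_not univ p]
  have hgood : ∑ i with p i, f i ≤ #{i | p i} * b := by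
    simpa using sum_le_card_nsmul _ _ _ fun i hi ↦ hfb i (mem_filter.1 hi).2
  have hbad : ∑ i with ¬ p i, f i ≤ #{i | ¬ p i} * K := by
    simpa using sum_le_card_nsmul _ _ _ fun i _ ↦ hfK i
  have hcard : (#{i | p i} : ℝ) ≤ Fintype.card ι := by exact_mod_cast card_le_univ _
  nlinarith

lemma le_sum_of_card_filter_not_le (ha : 0 ≤ a) (hδ : (#{i | ¬ p i} : ℝ) ≤ δ)
    (hf : ∀ i, 0 ≤ f i) (hfa : ∀ i, p i → a ≤ f i) :
    (Fintype.card ι - δ) * a ≤ ∑ i, f i := by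
  have hcard : (#{i | p i} : ℝ) + #{i | ¬ p i} = Fintype.card ι := by
    exact_mod_cast card_filter_add_card_filter_not (s := univ) p
  calc (Fintype.card ι - δ) * a ≤ #{i | p i} * a := by nlinarith
    _ ≤ ∑ i with p i, f i := by
      simpa using card_nsmul_le_sum _ _ _ fun i hi ↦ hfa i (mem_filter.1 hi).2
    _ ≤ ∑ i, f i := sum_le_sum_of_subset_of_nonneg (filter_subset _ _) fun i _ _ ↦ hf i

end FewExceptions

section Regularity

variable {X Y : Type*} [Fintype X] [Fintype Y] {G : X → Y → ℝ} {ε d : ℝ}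

def IsRegularPair (ε d : ℝ) (G : X → Y → ℝ) : Prop :=
  ∀ (A : Finset X) (B : Finset Y), ε * Fintype.card X < #A → ε * Fintype.card Y < #B →
    |(∑ x ∈ A, ∑ y ∈ B, G x y) / (#A * #B) - d| < ε

lemma IsRegularPair.abs_sum_sub_lt (hG : IsRegularPair ε d G) (hε : 0 ≤ ε) {A : Finset X}
    {B : Finset Y} (hA : ε * Fintype.card X < #A) (hB : ε * Fintype.card Y < #B) :
    |∑ x ∈ A, (∑ y ∈ B, G x y - d * #B)| < ε * (#A * #B) := by
  have hAB : (0 : ℝ) < #A * #B := mul_pos ((by positivity : (0 : ℝ) ≤ _).trans_lt hA)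
    ((by positivity : (0 : ℝ) ≤ _).trans_lt hB)
  have hdiff : ∑ x ∈ A, (∑ y ∈ B, G x y - d * #B) =
      ((∑ x ∈ A, ∑ y ∈ B, G x y) / (#A * #B) - d) * (#A * #B) := by
    rw [sum_sub_distrib, sum_const, nsmul_eq_mul, sub_mul, div_mul_cancel₀ _ hAB.ne']
    ring
  rw [hdiff, abs_mul, abs_of_pos hAB]
  exact mul_lt_mul_of_pos_right (hG A B hA hB) hAB

lemma IsRegularPair.card_dense_rows_le (hG : IsRegularPair ε d G) (hε : 0 ≤ ε) {B : Finset Y}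
    (hB : ε * Fintype.card Y < #B) :
    (#{x | ε * #B ≤ ∑ y ∈ B, G x y - d * #B} : ℝ) ≤ ε * Fintype.card X := by
  set A : Finset X := {x | ε * #B ≤ ∑ y ∈ B, G x y - d * #B}
  by_contra! hA
  have hsum : #A • (ε * #B) ≤ ∑ x ∈ A, (∑ y ∈ B, G x y - d * #B) :=
    card_nsmul_le_sum _ _ _ fun x hx ↦ (mem_filter.1 hx).2
  rw [nsmul_eq_mul] at hsum
  linarith [le_abs_self (∑ x ∈ A, (∑ y ∈ B, G x y - d * #B)), hG.abs_sum_sub_lt hε hA hB]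

lemma IsRegularPair.card_sparse_rows_le (hG : IsRegularPair ε d G) (hε : 0 ≤ ε) {B : Finset Y}
    (hB : ε * Fintype.card Y < #B) :
    (#{x | ∑ y ∈ B, G x y - d * #B ≤ -(ε * #B)} : ℝ) ≤ ε * Fintype.card X := by
  set A : Finset X := {x | ∑ y ∈ B, G x y - d * #B ≤ -(ε * #B)}
  by_contra! hA
  have hsum : ∑ x ∈ A, (∑ y ∈ B, G x y - d * #B) ≤ #A • -(ε * #B) :=
    sum_le_card_nsmul _ _ _ fun x hx ↦ (mem_filter.1 hx).2
  rw [nsmul_eq_mul] at hsum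
  linarith [neg_abs_le (∑ x ∈ A, (∑ y ∈ B, G x y - d * #B)), hG.abs_sum_sub_lt hε hA hB]

lemma IsRegularPair.card_atypical_rows_le (hG : IsRegularPair ε d G) (hε : 0 ≤ ε)
    {B : Finset Y} (hB : ε * Fintype.card Y < #B) :
    (#{x | ε * #B ≤ |∑ y ∈ B, G x y - d * #B|} : ℝ) ≤ 2 * ε * Fintype.card X := by
  classical
  have hsub : ({x | ε * #B ≤ |∑ y ∈ B, G x y - d * #B|} : Finset X) ⊆
      ({x | ε * #B ≤ ∑ y ∈ B, G x y - d * #B} : Finset X) ∪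
        ({x | ∑ y ∈ B, G x y - d * #B ≤ -(ε * #B)} : Finset X) := by
    intro x
    simp only [mem_filter, mem_univ, true_and, mem_union, le_abs']
    exact Or.symm
  have hcard : (#{x | ε * #B ≤ |∑ y ∈ B, G x y - d * #B|} : ℝ) ≤
      #{x | ε * #B ≤ ∑ y ∈ B, G x y - d * #B} +
        #{x | ∑ y ∈ B, G x y - d * #B ≤ -(ε * #B)} :=
    mod_cast (card_le_card hsub).trans (card_union_le _ _)
  linarith [hG.card_dense_rows_le hε hB, hG.card_sparse_rows_le hε hB]

end Regularity

section Codegree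

variable {X Y : Type*} [Fintype Y] {G : X → Y → ℝ}

def codegree (G : X → Y → ℝ) (x₁ x₂ : X) : ℝ := ∑ y, G x₁ y * G x₂ y

lemma sum_C4_eq_sum_codegree_sq [Fintype X] (G : X → Y → ℝ) :
    ∑ x₁, ∑ x₂, ∑ y₁, ∑ y₂, G x₁ y₁ * G x₁ y₂ * G x₂ y₁ * G x₂ y₂ =
      ∑ x₁, ∑ x₂, codegree G x₁ x₂ ^ 2 := by
  refine sum_congr rfl fun x₁ _ ↦ sum_congr rfl fun x₂ _ ↦ ?_
  rw [codegree, sq, sum_mul_sum]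
  exact sum_congr rfl fun y₁ _ ↦ sum_congr rfl fun y₂ _ ↦ by ring

lemma codegree_sq_le (h01 : ∀ x y, G x y = 0 ∨ G x y = 1) (x₁ x₂ : X) :
    codegree G x₁ x₂ ^ 2 ≤ (Fintype.card Y : ℝ) ^ 2 := by
  have h0 : ∀ x y, 0 ≤ G x y := fun x y ↦ by rcases h01 x y with h | h <;> simp [h]
  have h1 : ∀ x y, G x y ≤ 1 := fun x y ↦ by rcases h01 x y with h | h <;> simp [h]
  unfold codegree
  have hle : ∑ y, G x₁ y * G x₂ y ≤ Fintype.card Y := by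
    simpa using sum_le_card_nsmul univ _ 1 fun y _ ↦
      mul_le_one₀ (h1 x₁ y) (h0 x₂ y) (h1 x₂ y)
  exact pow_le_pow_left₀ (sum_nonneg fun y _ ↦ mul_nonneg (h0 x₁ y) (h0 x₂ y)) hle 2

noncomputable def neighborFinset (G : X → Y → ℝ) (x : X) : Finset Y := {y | G x y = 1}

lemma card_neighborFinset (h01 : ∀ x y, G x y = 0 ∨ G x y = 1) (x : X) :
    (#(neighborFinset G x) : ℝ) = ∑ y, G x y := by
  rw [neighborFinset, card_filter]
  push_cast
  exact sum_congr rfl fun y _ ↦ by rcases h01 x y with h | h <;> simp [h]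

lemma codegree_eq_sum_neighborFinset (h01 : ∀ x y, G x y = 0 ∨ G x y = 1) (x₁ x₂ : X) :
    codegree G x₁ x₂ = ∑ y ∈ neighborFinset G x₁, G x₂ y := by
  rw [codegree, neighborFinset, sum_filter]
  exact sum_congr rfl fun y _ ↦ by rcases h01 x₁ y with h | h <;> simp [h]

end Codegree

/-- For `a` the degree of `x₁` and `c` its codegree with `x₂`: `c ≈ d a ≈ d² N`. -/
lemma sq_mem_Icc_of_abs_sub_lt {d ε N a c : ℝ} (hεd : ε ≤ d) (hN : 0 ≤ N)
    (ha : |a - d * N| < ε * N) (hc : |c - d * a| < ε * a) :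
    c ^ 2 ∈ Set.Icc ((d - ε) ^ 4 * N ^ 2) ((d + ε) ^ 4 * N ^ 2) := by
  rw [abs_lt] at ha hc
  have hε : 0 < ε := pos_of_mul_pos_left (by linarith) hN
  have ha0 : 0 < a := pos_of_mul_pos_right (by linarith) hε.le
  have hlo : (d - ε) ^ 2 * N ≤ c := by
    nlinarith [mul_le_mul_of_nonneg_left ha.1.le (sub_nonneg.2 hεd)]
  have hhi : c ≤ (d + ε) ^ 2 * N := by
    nlinarith [mul_le_mul_of_nonneg_left ha.2.le (by linarith : 0 ≤ d + ε)]
  have hlo0 : 0 ≤ (d - ε) ^ 2 * N := by positivity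
  constructor
  · calc (d - ε) ^ 4 * N ^ 2 = ((d - ε) ^ 2 * N) ^ 2 := by ring
      _ ≤ c ^ 2 := pow_le_pow_left₀ hlo0 hlo 2
  · calc c ^ 2 ≤ ((d + ε) ^ 2 * N) ^ 2 := pow_le_pow_left₀ (hlo0.trans hlo) hhi 2
      _ = (d + ε) ^ 4 * N ^ 2 := by ring

lemma abs_sub_pow_four_le_of_mem_Icc {d ε t : ℝ} (hd0 : 0 ≤ d) (hd1 : d ≤ 1) (hε0 : 0 ≤ ε)
    (hε1 : ε ≤ 1 / 10) (ht : t ∈ Set.Icc ((d - ε) ^ 4 - 4 * ε) ((d + ε) ^ 4 + 4 * ε)) :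
    |t - d ^ 4| ≤ 10 * ε := by
  have hd2 : d ^ 2 ≤ 1 := pow_le_one₀ hd0 hd1
  have hd3 : d ^ 3 ≤ 1 := pow_le_one₀ hd0 hd1
  have hε2 : ε ^ 2 ≤ ε / 10 := by nlinarith
  have hε3 : ε ^ 3 ≤ ε / 100 := by nlinarith
  have hup : (d + ε) ^ 4 ≤ d ^ 4 + 6 * ε := by
    nlinarith [mul_le_mul_of_nonneg_right hd3 hε0, mul_le_mul_of_nonneg_right hd2 (sq_nonneg ε),
      mul_le_mul_of_nonneg_right hd1 (pow_nonneg hε0 3)]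
  have hlow : d ^ 4 - 6 * ε ≤ (d - ε) ^ 4 := by
    nlinarith [mul_le_mul_of_nonneg_right hd3 hε0, mul_nonneg (sq_nonneg d) (sq_nonneg ε),
      mul_le_mul_of_nonneg_right hd1 (pow_nonneg hε0 3)]
  rw [abs_le]
  constructor <;> linarith [ht.1, ht.2]

section CodegreeSums

variable {X Y : Type*} [Fintype X] [Fintype Y] {G : X → Y → ℝ} {ε d : ℝ}

lemma IsRegularPair.sum_codegree_sq_mem_Icc_of_typical (hG : IsRegularPair ε d G)
    (h01 : ∀ x y, G x y = 0 ∨ G x y = 1) (hε : 0 < ε) (hεd : 2 * ε ≤ d) {x₁ : X}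
    (hx₁ : |∑ y, G x₁ y - d * Fintype.card Y| < ε * Fintype.card Y) :
    ∑ x₂, codegree G x₁ x₂ ^ 2 ∈ Set.Icc
      ((Fintype.card X - 2 * ε * Fintype.card X) * ((d - ε) ^ 4 * Fintype.card Y ^ 2))
      (Fintype.card X * ((d + ε) ^ 4 * Fintype.card Y ^ 2) +
        2 * ε * Fintype.card X * Fintype.card Y ^ 2) := by
  have hdeg := card_neighborFinset h01 x₁
  have hnbhd : ε * Fintype.card Y < #(neighborFinset G x₁) := by
    rw [hdeg]
    nlinarith [(abs_lt.1 hx₁).1, (Fintype.card Y).cast_nonneg (α := ℝ)]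
  have hbad : (#{x₂ | codegree G x₁ x₂ ^ 2 ∉ Set.Icc ((d - ε) ^ 4 * Fintype.card Y ^ 2)
      ((d + ε) ^ 4 * Fintype.card Y ^ 2)} : ℝ) ≤ 2 * ε * Fintype.card X := by
    refine (Nat.cast_le.2 (card_le_card fun x₂ ↦ ?_)).trans
      (hG.card_atypical_rows_le hε.le hnbhd)
    simp only [mem_filter, mem_univ, true_and]
    contrapose!
    intro hx₂
    rw [codegree_eq_sum_neighborFinset h01]
    exact sq_mem_Icc_of_abs_sub_lt (by linarith) (by positivity) (hdeg ▸ hx₁) hx₂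
  exact ⟨le_sum_of_card_filter_not_le (by positivity) hbad (fun _ ↦ sq_nonneg _) fun _ h ↦ h.1,
    sum_le_of_card_filter_not_le (by positivity) (by positivity) hbad (codegree_sq_le h01 x₁)
      fun _ h ↦ h.2⟩

lemma IsRegularPair.sum_sum_codegree_sq_mem_Icc [Nonempty Y] (hG : IsRegularPair ε d G)
    (h01 : ∀ x y, G x y = 0 ∨ G x y = 1) (hε : 0 < ε) (hεd : 2 * ε ≤ d) (hd : d ≤ 1) :
    ∑ x₁, ∑ x₂, codegree G x₁ x₂ ^ 2 ∈ Set.Icc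
      (((d - ε) ^ 4 - 4 * ε) * (Fintype.card X ^ 2 * Fintype.card Y ^ 2))
      (((d + ε) ^ 4 + 4 * ε) * (Fintype.card X ^ 2 * Fintype.card Y ^ 2)) := by
  set M : ℝ := (Fintype.card X : ℝ)
  set N : ℝ := (Fintype.card Y : ℝ)
  have hN : 0 < N := Nat.cast_pos.2 Fintype.card_pos
  have huniv : ε * N < #(univ : Finset Y) := by
    rw [card_univ]
    nlinarith
  have hbad : (#{x₁ | ∑ x₂, codegree G x₁ x₂ ^ 2 ∉
      Set.Icc ((M - 2 * ε * M) * ((d - ε) ^ 4 * N ^ 2))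
        (M * ((d + ε) ^ 4 * N ^ 2) + 2 * ε * M * N ^ 2)} : ℝ) ≤ 2 * ε * M := by
    refine (Nat.cast_le.2 (card_le_card fun x₁ ↦ ?_)).trans
      (hG.card_atypical_rows_le hε.le huniv)
    simp only [mem_filter, mem_univ, true_and]
    contrapose!
    intro hx₁
    rw [card_univ] at hx₁
    exact hG.sum_codegree_sq_mem_Icc_of_typical h01 hε hεd hx₁
  have hrow : ∀ x₁, ∑ x₂, codegree G x₁ x₂ ^ 2 ≤ M * N ^ 2 := fun x₁ ↦ by
    simpa using sum_le_card_nsmul univ _ _ fun x₂ _ ↦ codegree_sq_le h01 x₁ x₂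
  have hM2ε : 0 ≤ M - 2 * ε * M := by nlinarith [(Fintype.card X).cast_nonneg (α := ℝ)]
  have hlo := le_sum_of_card_filter_not_le (by positivity) hbad
    (fun _ ↦ sum_nonneg fun _ _ ↦ sq_nonneg _) fun _ h ↦ h.1
  have hhi := sum_le_of_card_filter_not_le (by positivity) (by positivity) hbad hrow fun _ h ↦ h.2
  have hq : (d - ε) ^ 4 ≤ 1 := pow_le_one₀ (by linarith) (by linarith)
  constructor
  · calc ((d - ε) ^ 4 - 4 * ε) * (M ^ 2 * N ^ 2)
        ≤ (1 - 2 * ε) ^ 2 * (d - ε) ^ 4 * (M ^ 2 * N ^ 2) := by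
          refine mul_le_mul_of_nonneg_right ?_ (by positivity)
          nlinarith [mul_nonneg hε.le (sub_nonneg.2 hq),
            mul_nonneg (sq_nonneg ε) (pow_nonneg (by linarith : 0 ≤ d - ε) 4)]
      _ = (M - 2 * ε * M) * ((M - 2 * ε * M) * ((d - ε) ^ 4 * N ^ 2)) := by ring
      _ ≤ _ := hlo
  · linarith [hhi]

end CodegreeSums

/-- Counting 4-cycles in regular bipartite graphs: for `0 < 1/n ≪ ε ≪ d`, if `G`
is an `ε`-regular bipartite graph with parts of size at least `n` and density
`d`, then `|d_{C₄}(G) - d⁴| ≤ 10 ε`. -/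
theorem c4_count_of_regular :
    ∀ d : ℝ, 0 < d → d ≤ 1 →
    ∃ ε₀ : ℝ, 0 < ε₀ ∧ ∀ ε : ℝ, 0 < ε → ε < ε₀ →
    ∃ n₀ : ℕ, ∀ (X Y : Type) [Fintype X] [Fintype Y],
      n₀ ≤ Fintype.card X → n₀ ≤ Fintype.card Y →
      ∀ G : X → Y → ℝ, (∀ x y, G x y = 0 ∨ G x y = 1) →
      d = (∑ x, ∑ y, G x y) / ((Fintype.card X : ℝ) * (Fintype.card Y : ℝ)) →
      (∀ (X' : Finset X) (Y' : Finset Y),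
        ε * (Fintype.card X : ℝ) < X'.card → ε * (Fintype.card Y : ℝ) < Y'.card →
        |(∑ x ∈ X', ∑ y ∈ Y', G x y) / ((X'.card : ℝ) * (Y'.card : ℝ)) - d| < ε) →
      |(∑ x₁, ∑ x₂, ∑ y₁, ∑ y₂, G x₁ y₁ * G x₁ y₂ * G x₂ y₁ * G x₂ y₂) /
          ((Fintype.card X : ℝ) ^ 2 * (Fintype.card Y : ℝ) ^ 2) - d ^ 4| ≤ 10 * ε := by
  intro d hd0 hd1
  refine ⟨min (d / 2) (1 / 10), by positivity, fun ε hε hεε₀ ↦ ⟨1, ?_⟩⟩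
  intro X Y _ _ hX hY G h01 _ hreg
  have hεd : 2 * ε ≤ d := by linarith [hεε₀.trans_le (min_le_left _ _)]
  have hε10 : ε ≤ 1 / 10 := by linarith [hεε₀.trans_le (min_le_right _ _)]
  have : Nonempty Y := Fintype.card_pos_iff.1 hY
  have hMN : (0 : ℝ) < Fintype.card X ^ 2 * Fintype.card Y ^ 2 := by
    have hX₀ : 0 < Fintype.card X := hX
    positivity
  obtain ⟨hlo, hhi⟩ := IsRegularPair.sum_sum_codegree_sq_mem_Icc hreg h01 hε hεd hd1
  rw [sum_C4_eq_sum_codegree_sq]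
  exact abs_sub_pow_four_le_of_mem_Icc hd0.le hd1 hε.le hε10
    ⟨(le_div_iff₀ hMN).2 hlo, (div_le_iff₀ hMN).2 hhi⟩
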